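/- Let f : ℝ → ℝ be convex, let y ∈ ℤ and x ∈ ℝ with y + 1 ≤ x, and let f^pl denote the piecewise-linear interpolation of f on integer breakpoints. If φ_y is a subgradient of f^pl at y and φ_x is a subgradient of f at x, then φ_y ≤ φ_x. -/

import Mathlib

/-- Piecewise-linear interpolation of `f` on integer breakpoints. -/
noncomputable def fpl (f : ℝ → ℝ) (t : ℝ) : ℝ :=
  f (⌊t⌋ : ℝ) + (t - (⌊t⌋ : ℝ)) * (f (⌈t⌉ : ℝ) - f (⌊t⌋ : ℝ))

/-- `φ` is a subgradient of `g` at `p`. -/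
def IsSubgradientAt (g : ℝ → ℝ) (p φ : ℝ) : Prop :=
  ∀ q : ℝ, φ * (q - p) ≤ g q - g p

/-!
The subgradient `φy` of `f^pl` at the breakpoint `y` is at most the slope of `f^pl` on `[y, y + 1]`,
which is the slope of `f` there since `f^pl` agrees with `f` on integers. By convexity of `f` this is
at most the secant slope of `f` on `[y, x]`, and any subgradient of `f` at `x` dominates that.
-/

lemma fpl_intCast (f : ℝ → ℝ) (n : ℤ) : fpl f n = f n := by
  simp [fpl]

namespace IsSubgradientAt

variable {g : ℝ → ℝ} {p φ q : ℝ}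

lemma le_slope (h : IsSubgradientAt g p φ) (hpq : p < q) : φ ≤ (g q - g p) / (q - p) :=
  (le_div_iff₀ (sub_pos.2 hpq)).2 (by linarith [h q])

lemma slope_le (h : IsSubgradientAt g p φ) (hqp : q < p) : (g p - g q) / (p - q) ≤ φ :=
  (div_le_iff₀ (sub_pos.2 hqp)).2 (by linarith [h q])

end IsSubgradientAt

theorem stmt_1 (f : ℝ → ℝ) (hf : ConvexOn ℝ Set.univ f)
    (y : ℤ) (x : ℝ) (hxy : (y : ℝ) + 1 ≤ x)
    (φy φx : ℝ)
    (hφy : IsSubgradientAt (fpl f) (y : ℝ) φy)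
    (hφx : IsSubgradientAt f x φx) :
    φy ≤ φx := by
  have hy1 : fpl f ((y : ℝ) + 1) = f ((y : ℝ) + 1) := by
    exact_mod_cast fpl_intCast f (y + 1)
  calc φy ≤ (f ((y : ℝ) + 1) - f y) / ((y : ℝ) + 1 - y) := by
        simpa only [hy1, fpl_intCast] using hφy.le_slope (lt_add_one (y : ℝ))
    _ ≤ (f x - f y) / (x - y) :=
        hf.secant_mono trivial trivial trivial (by simp) (by linarith) hxy
    _ ≤ φx := hφx.slope_le (by linarith)
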